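/- Let V be a finite-dimensional inner product space and {x_k}, {y_k} sequences in V with Δt > 0. Suppose for all k: ‖y_{k+1}‖² − ‖y_k‖² + (Δt/2)·A_{k} ≤ Δt·c₁(‖y_k‖² + ‖y_{k+1}‖²) + Δt·g_k, where A_k ≥ 0, c₁ ≥ 0, g_k ≥ 0. Then for all k with 2c₁Δt < 1: ‖y_k‖² + (Δt/2)∑_{m=0}^{k−1} A_m ≤ e^{2c₁(k+1)Δt/(1−2c₁Δt)}·(‖y_0‖² + Δt∑_{m=0}^{k−1} g_m) (up to a modified constant in the exponent). -/

import Mathlib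

open Finset

/-!
Write `a = c₁ Δt` and `θ = 1 - 2a`. Each step of the hypothesis, after absorbing the implicit
term `a ‖y (k+1)‖²`, says that the energy `E k = ‖y k‖² + (Δt/2) ∑_{m<k} A m` satisfies
`θ E (k+1) ≤ E k + Δt g k`. Telescoping gives `θ^k E k ≤ ‖y 0‖² + Δt ∑_{m<k} g m`, and
`θ⁻¹ = 1 + 2a/θ ≤ exp (2a/θ)` turns `θ^{-k}` into the exponential factor.
-/

/-- Discrete Grönwall inequality for a contraction factor `θ ∈ [0, 1]`. -/
theorem pow_mul_le_add_sum_of_mul_succ_le {R : Type*} [CommSemiring R] [PartialOrder R]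
    [IsOrderedRing R] {E d : ℕ → R} {θ : R} (hθ₀ : 0 ≤ θ) (hθ₁ : θ ≤ 1)
    (hd : ∀ k, 0 ≤ d k) (h : ∀ k, θ * E (k + 1) ≤ E k + d k) (k : ℕ) :
    θ ^ k * E k ≤ E 0 + ∑ m ∈ range k, d m := by
  induction k with
  | zero => simp
  | succ k ih =>
    calc θ ^ (k + 1) * E (k + 1) = θ ^ k * (θ * E (k + 1)) := by ring
      _ ≤ θ ^ k * (E k + d k) := mul_le_mul_of_nonneg_left (h k) (pow_nonneg hθ₀ k)
      _ = θ ^ k * E k + θ ^ k * d k := mul_add _ _ _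
      _ ≤ (E 0 + ∑ m ∈ range k, d m) + d k :=
        add_le_add ih (mul_le_of_le_one_left (hd k) (pow_le_one₀ hθ₀ hθ₁))
      _ = E 0 + ∑ m ∈ range (k + 1), d m := by rw [sum_range_succ, add_assoc]

theorem one_sub_two_mul_mul_add_le {a Y Y' B G : ℝ} (ha : 0 ≤ a) (ha₂ : 2 * a < 1)
    (hY : 0 ≤ Y) (hB : 0 ≤ B) (hG : 0 ≤ G) (h : Y' - Y + B ≤ a * (Y + Y') + G) :
    (1 - 2 * a) * (Y' + B) ≤ Y + G := by
  have h' : (1 - 2 * a) * ((1 - a) * Y' + B) ≤ (1 - 2 * a) * ((1 + a) * Y + G) :=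
    mul_le_mul_of_nonneg_left (by linarith) (by linarith)
  refine le_of_mul_le_mul_left ?_ (by linarith : 0 < 1 - a)
  nlinarith [mul_nonneg ha hB, mul_nonneg ha hG, mul_nonneg (mul_nonneg ha ha) hY]

theorem one_sub_two_mul_mul_energy_succ_le {Y A g : ℕ → ℝ} {a Δt : ℝ} (ha : 0 ≤ a)
    (ha₂ : 2 * a < 1) (hΔt : 0 ≤ Δt) (hY : ∀ k, 0 ≤ Y k) (hA : ∀ k, 0 ≤ A k)
    (hg : ∀ k, 0 ≤ g k)
    (h : ∀ k, Y (k + 1) - Y k + (Δt / 2) * A k ≤ a * (Y k + Y (k + 1)) + Δt * g k) (k : ℕ) :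
    (1 - 2 * a) * (Y (k + 1) + (Δt / 2) * ∑ m ∈ range (k + 1), A m) ≤
      (Y k + (Δt / 2) * ∑ m ∈ range k, A m) + Δt * g k := by
  have hS : 0 ≤ (Δt / 2) * ∑ m ∈ range k, A m :=
    mul_nonneg (by positivity) (sum_nonneg fun m _ ↦ hA m)
  have hAk : 0 ≤ (Δt / 2) * A k := mul_nonneg (by positivity) (hA k)
  have hgk : 0 ≤ Δt * g k := mul_nonneg hΔt (hg k)
  have := one_sub_two_mul_mul_add_le (Y' := Y (k + 1)) ha ha₂ (hY k) (add_nonneg hAk hS) (add_nonneg hgk hS)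
    (by linarith [h k])
  rw [sum_range_succ]
  linarith

theorem Real.inv_pow_le_exp_mul {θ : ℝ} (hθ : 0 < θ) (k : ℕ) :
    θ⁻¹ ^ k ≤ Real.exp (k * ((1 - θ) / θ)) := by
  have hinv : θ⁻¹ ≤ Real.exp ((1 - θ) / θ) := by
    calc θ⁻¹ = (1 - θ) / θ + 1 := by field_simp; ring
      _ ≤ Real.exp ((1 - θ) / θ) := Real.add_one_le_exp _
  rw [Real.exp_nat_mul]
  exact pow_le_pow_left₀ (inv_nonneg.2 hθ.le) hinv k

theorem per_step_plus_gronwall_general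
    {V : Type*} [NormedAddCommGroup V]
    (y : ℕ → V) (A g : ℕ → ℝ) (hA : ∀ k, 0 ≤ A k) (hg : ∀ k, 0 ≤ g k)
    (c₁ Δt : ℝ) (hc₁ : 0 ≤ c₁) (hΔt : 0 < Δt)
    (hyp : ∀ k : ℕ, ‖y (k + 1)‖ ^ 2 - ‖y k‖ ^ 2 + (Δt / 2) * A k ≤
      Δt * c₁ * (‖y k‖ ^ 2 + ‖y (k + 1)‖ ^ 2) + Δt * g k)
    (hsmall : 2 * c₁ * Δt < 1) :
    ∀ k : ℕ, ‖y k‖ ^ 2 + (Δt / 2) * ∑ m ∈ range k, A m ≤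
      Real.exp (2 * c₁ * (k + 1) * Δt / (1 - 2 * c₁ * Δt)) *
        (‖y 0‖ ^ 2 + Δt * ∑ m ∈ range k, g m) := by
  intro k
  set θ := 1 - 2 * (Δt * c₁) with hθ
  have hgron := pow_mul_le_add_sum_of_mul_succ_le (θ := θ)
    (E := fun m ↦ ‖y m‖ ^ 2 + (Δt / 2) * ∑ i ∈ range m, A i) (by linarith) (by nlinarith)
    (fun m ↦ mul_nonneg hΔt.le (hg m))
    (one_sub_two_mul_mul_energy_succ_le (mul_nonneg hΔt.le hc₁) (by linarith) hΔt.le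
      (fun m ↦ sq_nonneg ‖y m‖) hA hg hyp) k
  simp only [range_zero, sum_empty, mul_zero, add_zero, ← mul_sum] at hgron
  have hθ₀ : 0 < θ := by linarith
  have hexp : (k : ℝ) * ((1 - θ) / θ) ≤ 2 * c₁ * (k + 1) * Δt / (1 - 2 * c₁ * Δt) :=
    calc (k : ℝ) * ((1 - θ) / θ) = 2 * c₁ * k * Δt / (1 - 2 * c₁ * Δt) := by rw [hθ]; ring
      _ ≤ _ := div_le_div_of_nonneg_right (by nlinarith) (by linarith)
  calc _ = θ⁻¹ ^ k * (θ ^ k * (‖y k‖ ^ 2 + (Δt / 2) * ∑ m ∈ range k, A m)) := by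
        rw [← mul_assoc, ← mul_pow, inv_mul_cancel₀ hθ₀.ne', one_pow, one_mul]
    _ ≤ θ⁻¹ ^ k * (‖y 0‖ ^ 2 + Δt * ∑ m ∈ range k, g m) :=
        mul_le_mul_of_nonneg_left hgron (pow_nonneg (inv_nonneg.2 hθ₀.le) k)
    _ ≤ _ := mul_le_mul_of_nonneg_right
        ((Real.inv_pow_le_exp_mul hθ₀ k).trans (Real.exp_le_exp.2 hexp))
        (add_nonneg (sq_nonneg _) (mul_nonneg hΔt.le (sum_nonneg fun m _ ↦ hg m)))

/-- Combination of the per-step energy estimate and the discrete Grönwall inequality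
yielding the final a priori error bound of Theorem 4.2. -/
theorem per_step_plus_gronwall
    {V : Type*} [NormedAddCommGroup V] [InnerProductSpace ℝ V] [FiniteDimensional ℝ V]
    (y : ℕ → V) (A g : ℕ → ℝ) (hA : ∀ k, 0 ≤ A k) (hg : ∀ k, 0 ≤ g k)
    (c₁ Δt : ℝ) (hc₁ : 0 ≤ c₁) (hΔt : 0 < Δt)
    (hyp : ∀ k : ℕ, ‖y (k + 1)‖ ^ 2 - ‖y k‖ ^ 2 + (Δt / 2) * A k ≤
      Δt * c₁ * (‖y k‖ ^ 2 + ‖y (k + 1)‖ ^ 2) + Δt * g k)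
    (hsmall : 2 * c₁ * Δt < 1) :
    ∀ k : ℕ, ‖y k‖ ^ 2 + (Δt / 2) * ∑ m ∈ range k, A m ≤
      Real.exp (2 * c₁ * (k + 1) * Δt / (1 - 2 * c₁ * Δt)) *
        (‖y 0‖ ^ 2 + Δt * ∑ m ∈ range k, g m) :=
  per_step_plus_gronwall_general y A g hA hg c₁ Δt hc₁ hΔt hyp hsmall
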